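/- If K is a Markov kernel from E to E and there exists a nonnegative measure ν on E with ν(E) ≥ d such that δ_x K ≥ ν for every x ∈ E, then for any two probability measures μ₁, μ₂ on E, the total variation distance satisfies ‖μ₁K − μ₂K‖_TV ≤ (1 − d)‖μ₁ − μ₂‖_TV. -/

import Mathlib

/-! Minorization by `ν` confines `x ↦ K(x, A)` to the interval `[ν(A), 1 - ν(Aᶜ)]`, whose
length `1 - ν(E)` does not depend on `A`. Since `(μK)(A) = ∫ K(x, A) dμ(x)`, it remains to see that
a function with values in `[a, b]` has `∫ f dμ₁ - ∫ f dμ₂ ≤ (b - a) ‖μ₁ - μ₂‖_TV`, which follows from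
a Hahn decomposition of `μ₁ - μ₂`. -/

open MeasureTheory ProbabilityTheory

/-- Total variation distance between two (finite) measures, defined as the supremum over
measurable sets of the absolute difference of the measures (for differences of probability
measures this is half of the `sup - inf` convention of the paper, a harmless rescaling that
we use consistently). -/
noncomputable def tvDist {E : Type*} [MeasurableSpace E] (μ ν : Measure E) : ℝ :=
  ⨆ A : {s : Set E // MeasurableSet s}, |(μ A.1).toReal - (ν A.1).toReal|

section tvDist

variable {α E : Type*} [MeasurableSpace α] [MeasurableSpace E]

lemma tvDist_symm (μ ν : Measure E) : tvDist μ ν = tvDist ν μ :=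
  iSup_congr fun _ => abs_sub_comm _ _

lemma tvDist_nonneg (μ ν : Measure E) : 0 ≤ tvDist μ ν :=
  Real.iSup_nonneg fun _ => abs_nonneg _

lemma measureReal_sub_le_tvDist (μ ν : Measure E) [IsFiniteMeasure μ] [IsFiniteMeasure ν]
    {A : Set E} (hA : MeasurableSet A) : μ.real A - ν.real A ≤ tvDist μ ν := by
  have hbdd : BddAbove (Set.range fun B : {s : Set E // MeasurableSet s} =>
      |μ.real B.1 - ν.real B.1|) := by
    refine ⟨μ.real Set.univ + ν.real Set.univ, ?_⟩
    rintro _ ⟨B, rfl⟩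
    have hμ := measureReal_mono (μ := μ) (Set.subset_univ B.1)
    have hν := measureReal_mono (μ := ν) (Set.subset_univ B.1)
    have := measureReal_nonneg (μ := μ) (s := B.1)
    have := measureReal_nonneg (μ := ν) (s := B.1)
    exact abs_sub_le_iff.2 ⟨by linarith, by linarith⟩
  exact (le_abs_self _).trans (le_ciSup hbdd ⟨A, hA⟩)

lemma tvDist_le_of_measureReal_sub_le {μ ν : Measure E} {r : ℝ}
    (h₁ : ∀ A, MeasurableSet A → μ.real A - ν.real A ≤ r)
    (h₂ : ∀ A, MeasurableSet A → ν.real A - μ.real A ≤ r) : tvDist μ ν ≤ r :=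
  have : Nonempty {s : Set E // MeasurableSet s} := ⟨⟨∅, MeasurableSet.empty⟩⟩
  ciSup_le fun A => abs_sub_le_iff.2 ⟨h₁ A.1 A.2, h₂ A.1 A.2⟩

/-- On a Hahn set `S` of `μ₁ - μ₂`, integrating `c - h ≥ 0` against `μ₂ ≤ μ₁` gives
`∫_S h d(μ₁ - μ₂) ≤ c (μ₁ - μ₂)(S)`; off `S`, `μ₁ ≤ μ₂` and `h ≥ 0` give a nonpositive part. -/
lemma integral_sub_integral_le_mul_tvDist (μ₁ μ₂ : Measure E) [IsFiniteMeasure μ₁]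
    [IsFiniteMeasure μ₂] {h : E → ℝ} {c : ℝ} (hm : Measurable h) (h_nonneg : ∀ x, 0 ≤ h x)
    (h_le : ∀ x, h x ≤ c) (hc : 0 ≤ c) :
    ∫ x, h x ∂μ₁ - ∫ x, h x ∂μ₂ ≤ c * tvDist μ₁ μ₂ := by
  obtain ⟨S, hS, hle, hge⟩ := exists_isHahnDecomposition μ₂ μ₁
  have hint : ∀ (μ : Measure E) [IsFiniteMeasure μ], Integrable h μ := fun μ _ =>
    .of_bound hm.aestronglyMeasurable c
      (.of_forall fun x => by rw [Real.norm_of_nonneg (h_nonneg x)]; exact h_le x)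
  have on_S : ∫ x in S, h x ∂μ₁ - ∫ x in S, h x ∂μ₂ ≤ c * (μ₁.real S - μ₂.real S) := by
    have hmono : ∫ x in S, (c - h x) ∂μ₂ ≤ ∫ x in S, (c - h x) ∂μ₁ :=
      integral_mono_measure hle (.of_forall fun x => sub_nonneg.2 (h_le x))
        ((integrable_const c).sub (hint μ₁)).restrict
    rw [integral_sub (integrable_const c) (hint μ₂).restrict,
      integral_sub (integrable_const c) (hint μ₁).restrict,
      setIntegral_const, setIntegral_const, smul_eq_mul, smul_eq_mul] at hmono
    linarith
  have on_Sc : ∫ x in Sᶜ, h x ∂μ₁ ≤ ∫ x in Sᶜ, h x ∂μ₂ :=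
    integral_mono_measure hge (.of_forall h_nonneg) (hint μ₂).restrict
  calc ∫ x, h x ∂μ₁ - ∫ x, h x ∂μ₂
      = (∫ x in S, h x ∂μ₁ - ∫ x in S, h x ∂μ₂) + (∫ x in Sᶜ, h x ∂μ₁ - ∫ x in Sᶜ, h x ∂μ₂) := by
        rw [← integral_add_compl hS (hint μ₁), ← integral_add_compl hS (hint μ₂)]; ring
    _ ≤ c * (μ₁.real S - μ₂.real S) := by linarith
    _ ≤ c * tvDist μ₁ μ₂ := mul_le_mul_of_nonneg_left (measureReal_sub_le_tvDist μ₁ μ₂ hS) hc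

lemma integral_sub_integral_le_of_mem_Icc (μ₁ μ₂ : Measure E) [IsProbabilityMeasure μ₁]
    [IsProbabilityMeasure μ₂] {f : E → ℝ} {a b : ℝ} (hm : Measurable f)
    (hf : ∀ x, f x ∈ Set.Icc a b) :
    ∫ x, f x ∂μ₁ - ∫ x, f x ∂μ₂ ≤ (b - a) * tvDist μ₁ μ₂ := by
  obtain ⟨x₀⟩ := nonempty_of_isProbabilityMeasure μ₁
  have hshift := integral_sub_integral_le_mul_tvDist μ₁ μ₂ (hm.sub_const a)
    (fun x => sub_nonneg.2 (hf x).1) (fun x => sub_le_sub_right (hf x).2 a)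
    (sub_nonneg.2 ((hf x₀).1.trans (hf x₀).2))
  have hint : ∀ (μ : Measure E) [IsProbabilityMeasure μ], Integrable f μ := fun μ _ =>
    .of_bound hm.aestronglyMeasurable (|a| + |b|) (.of_forall fun x => by
      rw [Real.norm_eq_abs, abs_le]
      constructor <;> linarith [(hf x).1, (hf x).2, neg_abs_le a, le_abs_self b, abs_nonneg a,
        abs_nonneg b])
  rwa [integral_sub (hint μ₁) (integrable_const a), integral_sub (hint μ₂) (integrable_const a),
    integral_const, integral_const, probReal_univ, probReal_univ, sub_sub_sub_cancel_right]
    at hshift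

lemma measureReal_bind_eq_integral (K : Kernel α E) [IsFiniteKernel K] (μ : Measure α)
    {A : Set E} (hA : MeasurableSet A) :
    (μ.bind (fun x => K x)).real A = ∫ x, (K x).real A ∂μ := by
  rw [measureReal_def, Measure.bind_apply hA K.measurable.aemeasurable,
    ← integral_toReal (K.measurable_coe hA).aemeasurable (.of_forall fun x => measure_lt_top _ _)]
  rfl

lemma measureReal_mem_Icc_of_minorized (K : Kernel α E) [IsMarkovKernel K] (ν : Measure E)
    [IsFiniteMeasure ν] (hdom : ∀ x : α, ∀ A : Set E, MeasurableSet A → ν A ≤ K x A)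
    {A : Set E} (hA : MeasurableSet A) (x : α) :
    (K x).real A ∈ Set.Icc (ν.real A) (1 - ν.real Aᶜ) := by
  have hmono : ∀ B, MeasurableSet B → ν.real B ≤ (K x).real B := fun B hB =>
    ENNReal.toReal_mono (measure_ne_top _ _) (hdom x B hB)
  refine ⟨hmono A hA, ?_⟩
  linarith [hmono Aᶜ hA.compl, probReal_compl_eq_one_sub (μ := K x) hA]

lemma tvDist_bind_le_of_minorized (K : Kernel α E) [IsMarkovKernel K] (ν : Measure E)
    [IsFiniteMeasure ν] (hdom : ∀ x : α, ∀ A : Set E, MeasurableSet A → ν A ≤ K x A)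
    (μ₁ μ₂ : Measure α) [IsProbabilityMeasure μ₁] [IsProbabilityMeasure μ₂] :
    tvDist (μ₁.bind (fun x => K x)) (μ₂.bind (fun x => K x))
      ≤ (1 - ν.real Set.univ) * tvDist μ₁ μ₂ := by
  have key : ∀ (μ μ' : Measure α) [IsProbabilityMeasure μ] [IsProbabilityMeasure μ'] (A : Set E),
      MeasurableSet A → (μ.bind (fun x => K x)).real A - (μ'.bind (fun x => K x)).real A
        ≤ (1 - ν.real Set.univ) * tvDist μ μ' := by
    intro μ μ' _ _ A hA
    rw [measureReal_bind_eq_integral K μ hA, measureReal_bind_eq_integral K μ' hA,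
      ← measureReal_add_measureReal_compl hA, sub_add_eq_sub_sub_swap]
    exact integral_sub_integral_le_of_mem_Icc μ μ' (K.measurable_coe hA).ennreal_toReal
      (measureReal_mem_Icc_of_minorized K ν hdom hA)
  refine tvDist_le_of_measureReal_sub_le (key μ₁ μ₂) fun A hA => ?_
  rw [tvDist_symm μ₁ μ₂]
  exact key μ₂ μ₁ A hA

end tvDist

theorem stmt0_general {E : Type*} [MeasurableSpace E] (K : Kernel E E) [IsMarkovKernel K]
    (ν : Measure E) [IsFiniteMeasure ν] (d : ℝ)
    (hmass : d ≤ (ν Set.univ).toReal)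
    (hdom : ∀ x : E, ∀ A : Set E, MeasurableSet A → ν A ≤ K x A)
    (μ₁ μ₂ : Measure E) [IsProbabilityMeasure μ₁] [IsProbabilityMeasure μ₂] :
    tvDist (μ₁.bind (fun x => K x)) (μ₂.bind (fun x => K x)) ≤ (1 - d) * tvDist μ₁ μ₂ :=
  (tvDist_bind_le_of_minorized K ν hdom μ₁ μ₂).trans <|
    mul_le_mul_of_nonneg_right (by rw [measureReal_def]; linarith) (tvDist_nonneg μ₁ μ₂)

/-- If `K` is a Markov kernel and there is a nonnegative measure `ν` with mass at least `d`
such that `δ_x K ≥ ν` for all `x`, then `‖μ₁K − μ₂K‖_TV ≤ (1 − d)‖μ₁ − μ₂‖_TV`. -/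
theorem stmt0 {E : Type*} [MeasurableSpace E] (K : Kernel E E) [IsMarkovKernel K]
    (ν : Measure E) [IsFiniteMeasure ν] (d : ℝ) (hd0 : 0 ≤ d) (hd1 : d ≤ 1)
    (hmass : d ≤ (ν Set.univ).toReal)
    (hdom : ∀ x : E, ∀ A : Set E, MeasurableSet A → ν A ≤ K x A)
    (μ₁ μ₂ : Measure E) [IsProbabilityMeasure μ₁] [IsProbabilityMeasure μ₂] :
    tvDist (μ₁.bind (fun x => K x)) (μ₂.bind (fun x => K x)) ≤ (1 - d) * tvDist μ₁ μ₂ :=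
  stmt0_general K ν d hmass hdom μ₁ μ₂
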